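/- (Theorem 1, minimal-budget formula.) For every m ∈ ℕ with m ≤ L.length (the number of solvable questions), the minimum total token budget required to answer at least m questions correctly equals the sum of the m smallest finite token complexities: T*(m) = (L.take m).sum, where T*(m) is the minimum of ∑ i, t i over all allocations t : Fin n → ℕ with card {i | τ i ≤ t i} ≥ m. -/

import Mathlib

/-!
Allocating exactly `τ i` tokens to each of the `m` cheapest solvable questions answers `m`
questions with total budget the sum of the first `m` entries of the sorted list. Conversely,
any allocation answering `m` questions spends at least `τ i` on each of `m` solvable
questions, and the finite complexities of any `m` of them sum to at least the `m` smallest.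
-/

/-- There are `n` questions with token complexities `τ : Fin n → ℕ∞`
(`τ i = ⊤` means question `i` is unsolvable at any response length).
Under the token complexity hypothesis, an allocation of response lengths
`t : Fin n → ℕ` answers question `i` correctly iff `τ i ≤ (t i : ℕ∞)`.
`Astar n τ B` is the maximum number of correctly answered questions over
all allocations with total length at most `B`. -/
noncomputable def Astar (n : ℕ) (τ : Fin n → ℕ∞) (B : ℕ) : ℕ :=
  sSup { c : ℕ | ∃ t : Fin n → ℕ, (∑ i, t i) ≤ B ∧
    (Finset.univ.filter (fun i => τ i ≤ (t i : ℕ∞))).card = c }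

/-- `Tstar n τ m` is the minimum total token budget `∑ i, t i` over all
allocations `t : Fin n → ℕ` answering at least `m` questions correctly. -/
noncomputable def Tstar (n : ℕ) (τ : Fin n → ℕ∞) (m : ℕ) : ℕ :=
  sInf { s : ℕ | ∃ t : Fin n → ℕ,
    m ≤ (Finset.univ.filter (fun i => τ i ≤ (t i : ℕ∞))).card ∧ (∑ i, t i) = s }

/-- `sortedL n τ` is the list of the values `(τ i).toNat` over all indices `i`
with `τ i < ⊤`, sorted in increasing order. -/
def sortedL (n : ℕ) (τ : Fin n → ℕ∞) : List ℕ :=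
  Multiset.sort
    (Multiset.map (fun i => (τ i).toNat) (Finset.univ.filter (fun i => τ i < ⊤)).val) (· ≤ ·)

open Finset

namespace List

variable {α : Type*} [AddCommMonoid α] [PartialOrder α] [IsOrderedAddMonoid α]

theorem Pairwise.sum_take_length_le_sum_of_sublist {l l' : List α}
    (hl : l.Pairwise (· ≤ ·)) (h : l' <+ l) : (l.take l'.length).sum ≤ l'.sum := by
  induction l generalizing l' with
  | nil => simp [sublist_nil.mp h]
  | cons a l ih =>
    cases h with
    | cons _ h =>
      cases l' with
      | nil => simp
      | cons b l' =>
        have hab : a ≤ b := rel_of_pairwise_cons hl (h.subset mem_cons_self)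
        have := ih hl.of_cons ((sublist_cons_self b l').trans h)
        simpa using add_le_add hab this
    | cons_cons _ h => simpa using add_le_add_right (ih hl.of_cons h) a

end List

namespace Multiset

theorem sum_take_sort_card_le_sum {α : Type*} [AddCommMonoid α] [LinearOrder α]
    [IsOrderedAddMonoid α] {s t : Multiset α} (h : s ≤ t) :
    ((t.sort (· ≤ ·)).take (card s)).sum ≤ s.sum := by
  have hsub : (s.sort (· ≤ ·)).Sublist (t.sort (· ≤ ·)) :=
    List.sublist_of_subperm_of_pairwise (coe_le.mp (by rwa [sort_eq, sort_eq]))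
      (pairwise_sort _ _) (pairwise_sort _ _)
  simpa [length_sort, ← sum_coe, sort_eq] using
    (pairwise_sort t _).sum_take_length_le_sum_of_sublist hsub

theorem exists_le_map_eq_of_le_map {α β : Type*} {f : α → β} {s : Multiset α}
    {u : Multiset β} (h : u ≤ s.map f) : ∃ v ≤ s, v.map f = u := by
  induction u using Quotient.inductionOn with
  | h lu =>
    induction s using Quotient.inductionOn with
    | h ls =>
      obtain ⟨l, hperm, hsub⟩ := coe_le.mp h
      obtain ⟨lv, hlv, rfl⟩ := List.sublist_map_iff.mp hsub
      exact ⟨lv, coe_le.mpr hlv.subperm, Quot.sound hperm⟩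

end Multiset

theorem Finset.exists_subset_map_val_eq_of_le_map {ι β : Type*} {f : ι → β} {s : Finset ι}
    {u : Multiset β} (h : u ≤ s.val.map f) : ∃ S ⊆ s, S.val.map f = u := by
  obtain ⟨v, hv, rfl⟩ := Multiset.exists_le_map_eq_of_le_map h
  exact ⟨⟨v, Multiset.nodup_of_le hv s.nodup⟩, val_le_iff.mp hv, rfl⟩

section TokenComplexity

variable {n : ℕ} (τ : Fin n → ℕ∞)

theorem coe_sortedL :
    (sortedL n τ : Multiset ℕ) = (univ.filter (τ · < ⊤)).val.map (fun i => (τ i).toNat) :=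
  Multiset.sort_eq _ _

theorem sum_take_sortedL_le_of_le_card {m : ℕ} (t : Fin n → ℕ)
    (ht : m ≤ (univ.filter fun i => τ i ≤ (t i : ℕ∞)).card) :
    ((sortedL n τ).take m).sum ≤ ∑ i, t i := by
  obtain ⟨S, hS, rfl⟩ := exists_subset_card_eq ht
  have hτt : ∀ i ∈ S, τ i ≤ t i := fun i hi => (mem_filter.mp (hS hi)).2
  have hSfin : S ⊆ univ.filter (τ · < ⊤) := fun i hi =>
    mem_filter.mpr ⟨mem_univ i, (hτt i hi).trans_lt (ENat.natCast_lt_top _)⟩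
  calc ((sortedL n τ).take S.card).sum ≤ ∑ i ∈ S, (τ i).toNat := by
        have h := Multiset.sum_take_sort_card_le_sum
          (Multiset.map_le_map (f := fun i => (τ i).toNat) (val_le_iff.mpr hSfin))
        rwa [Multiset.card_map] at h
    _ ≤ ∑ i ∈ S, t i := sum_le_sum fun i hi => ENat.toNat_le_of_le_natCast (hτt i hi)
    _ ≤ ∑ i, t i := sum_le_sum_of_subset (subset_univ S)

theorem exists_allocation_sum_eq_sum_take_sortedL {m : ℕ} (hm : m ≤ (sortedL n τ).length) :
    ∃ t : Fin n → ℕ, m ≤ (univ.filter fun i => τ i ≤ (t i : ℕ∞)).card ∧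
      ∑ i, t i = ((sortedL n τ).take m).sum := by
  have htake : ((sortedL n τ).take m : Multiset ℕ) ≤
      (univ.filter (τ · < ⊤)).val.map (fun i => (τ i).toNat) :=
    coe_sortedL τ ▸ Multiset.coe_le.mpr (List.take_sublist m _).subperm
  obtain ⟨S, hS, hSmap⟩ := exists_subset_map_val_eq_of_le_map htake
  refine ⟨fun i => if i ∈ S then (τ i).toNat else 0, ?_, ?_⟩
  · have hcard : S.card = m := by
      simpa [hm] using congrArg Multiset.card hSmap
    refine hcard ▸ card_le_card fun i hi => mem_filter.mpr ⟨mem_univ i, ?_⟩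
    simpa [hi] using (ENat.natCast_toNat (mem_filter.mp (hS hi)).2.ne).ge
  · rw [sum_ite_mem, univ_inter, Finset.sum, hSmap, Multiset.sum_coe]

end TokenComplexity

/-- Theorem 1, minimal-budget formula: for `m` at most the number of solvable
questions, the minimum total budget to answer at least `m` questions correctly
equals the sum of the `m` smallest finite token complexities. -/
theorem tstar_eq_take_sum (n : ℕ) (τ : Fin n → ℕ∞) (m : ℕ)
    (hm : m ≤ (sortedL n τ).length) :
    Tstar n τ m = ((sortedL n τ).take m).sum := by
  obtain ⟨t, ht, hsum⟩ := exists_allocation_sum_eq_sum_take_sortedL τ hm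
  refine le_antisymm (Nat.sInf_le ⟨t, ht, hsum⟩) (le_csInf ⟨_, t, ht, hsum⟩ ?_)
  rintro _ ⟨t', ht', rfl⟩
  exact sum_take_sortedL_le_of_le_card τ t' ht'
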